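/- Let A, B, C be real symmetric positive semidefinite n×n matrices, and define d_B(X, Y) = √( tr(X) + tr(Y) − 2·tr((√X · Y · √X)^{1/2}) ) for positive semidefinite X, Y (the Bures distance; the expression under the square root is nonnegative). Then d_B(A, C) ≤ d_B(A, B) + d_B(B, C); that is, the Bures distance satisfies the triangle inequality on positive semidefinite matrices. -/

import Mathlib

open Matrix

/-- The unique positive semidefinite square root of a positive semidefinite real matrix
(junk value `0` if the matrix is not positive semidefinite; it is only ever applied to
positive semidefinite matrices below). -/
noncomputable def psdSqrt {n : ℕ} (M : Matrix (Fin n) (Fin n) ℝ) :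
    Matrix (Fin n) (Fin n) ℝ := by
  classical exact if h : M.PosSemidef then
    (h.1.eigenvectorUnitary.1 * diagonal ((↑) ∘ (√·) ∘ h.1.eigenvalues) *
      (star h.1.eigenvectorUnitary : Matrix (Fin n) (Fin n) ℝ)) else 0

/-- The Bures distance between positive semidefinite real matrices:
`d_B(X, Y) = √(tr X + tr Y − 2·tr((√X Y √X)^{1/2}))`. -/
noncomputable def buresDist {n : ℕ} (X Y : Matrix (Fin n) (Fin n) ℝ) : ℝ :=
  Real.sqrt (X.trace + Y.trace - 2 * (psdSqrt (psdSqrt X * Y * psdSqrt X)).trace)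

namespace BuresAux

variable {n : ℕ}

/-- the explicit square root -/
noncomputable def pSqrt {M : Matrix (Fin n) (Fin n) ℝ} (h : M.PosSemidef) :
    Matrix (Fin n) (Fin n) ℝ :=
  h.1.eigenvectorUnitary.1 * diagonal ((↑) ∘ (√·) ∘ h.1.eigenvalues) *
    (star h.1.eigenvectorUnitary : Matrix (Fin n) (Fin n) ℝ)

lemma pSqrt_isHermitian {M : Matrix (Fin n) (Fin n) ℝ} (h : M.PosSemidef) :
    (pSqrt h)ᴴ = pSqrt h := by
  unfold pSqrt
  rw [conjTranspose_mul, conjTranspose_mul, diagonal_conjTranspose]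
  simp [Matrix.mul_assoc, Matrix.star_eq_conjTranspose]

lemma pSqrt_mul_self {M : Matrix (Fin n) (Fin n) ℝ} (h : M.PosSemidef) :
    pSqrt h * pSqrt h = M := by
  conv_rhs => rw [h.1.spectral_theorem, Unitary.conjStarAlgAut_apply]
  unfold pSqrt
  simp only [Matrix.mul_assoc]
  rw [← Matrix.mul_assoc (star h.1.eigenvectorUnitary : Matrix (Fin n) (Fin n) ℝ),
    Unitary.coe_star_mul_self, Matrix.one_mul, ← Matrix.mul_assoc (diagonal _) (diagonal _), diagonal_mul_diagonal]
  congr 3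
  ext i
  simp [Real.mul_self_sqrt (h.eigenvalues_nonneg i)]

lemma psdSqrt_eq {M : Matrix (Fin n) (Fin n) ℝ} (h : M.PosSemidef) :
    psdSqrt M = pSqrt h := by
  unfold psdSqrt
  rw [dif_pos h]
  rfl

/-- columns of the eigenvector basis, as plain vectors -/
noncomputable def evB {M : Matrix (Fin n) (Fin n) ℝ} (h : M.IsHermitian) (i : Fin n) :
    Fin n → ℝ := ⇑(h.eigenvectorBasis i)

lemma evB_dot {M : Matrix (Fin n) (Fin n) ℝ} (h : M.IsHermitian) (i j : Fin n) :
    evB h i ⬝ᵥ evB h j = if i = j then 1 else 0 := by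
  have horth := h.eigenvectorBasis.orthonormal
  rw [orthonormal_iff_ite] at horth
  have := horth i j
  rw [dotProduct_comm]
  simpa [PiLp.inner_apply, RCLike.inner_apply, dotProduct, evB] using this

lemma evB_mulVec {M : Matrix (Fin n) (Fin n) ℝ} (h : M.IsHermitian) (i : Fin n) :
    M *ᵥ evB h i = h.eigenvalues i • evB h i := h.mulVec_eigenvectorBasis i

lemma mulVec_dot (M : Matrix (Fin n) (Fin n) ℝ) (v w : Fin n → ℝ) :
    (M *ᵥ v) ⬝ᵥ w = v ⬝ᵥ (Mᴴ *ᵥ w) := by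
  simp only [dotProduct, mulVec, conjTranspose_apply, star_trivial, Finset.sum_mul,
    Finset.mul_sum]
  rw [Finset.sum_comm]
  apply Finset.sum_congr rfl; intro i _
  apply Finset.sum_congr rfl; intro j _
  ring

lemma dot_mulVec (M : Matrix (Fin n) (Fin n) ℝ) (v w : Fin n → ℝ) :
    v ⬝ᵥ (M *ᵥ w) = (Mᴴ *ᵥ v) ⬝ᵥ w := by
  have h := mulVec_dot Mᴴ v w
  rw [conjTranspose_conjTranspose] at h
  exact h.symm

/-- Cauchy–Schwarz for dot products. -/
lemma dot_le_sqrt (a b : Fin n → ℝ) :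
    a ⬝ᵥ b ≤ Real.sqrt (a ⬝ᵥ a) * Real.sqrt (b ⬝ᵥ b) := by
  have h := Finset.sum_mul_sq_le_sq_mul_sq Finset.univ a b
  have haa : a ⬝ᵥ a = ∑ i, a i ^ 2 := by simp [dotProduct, pow_two]
  have hbb : b ⬝ᵥ b = ∑ i, b i ^ 2 := by simp [dotProduct, pow_two]
  have hab : a ⬝ᵥ b = ∑ i, a i * b i := rfl
  calc a ⬝ᵥ b ≤ |a ⬝ᵥ b| := le_abs_self _
    _ = Real.sqrt ((a ⬝ᵥ b) ^ 2) := (Real.sqrt_sq_eq_abs _).symm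
    _ ≤ Real.sqrt ((a ⬝ᵥ a) * (b ⬝ᵥ b)) := by
        apply Real.sqrt_le_sqrt
        rw [hab, haa, hbb]; exact h
    _ = Real.sqrt (a ⬝ᵥ a) * Real.sqrt (b ⬝ᵥ b) := by
        rw [Real.sqrt_mul]
        rw [haa]; positivity

lemma diag3 (P X Q : Matrix (Fin n) (Fin n) ℝ) (i : Fin n) :
    (Pᴴ * X * Q) i i = (fun a => P a i) ⬝ᵥ (X *ᵥ fun a => Q a i) := by
  simp only [mul_apply, conjTranspose_apply, star_trivial, dotProduct, mulVec,
    Finset.sum_mul, Finset.mul_sum]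
  rw [Finset.sum_comm]
  apply Finset.sum_congr rfl; intro a _
  apply Finset.sum_congr rfl; intro b _
  ring

lemma trace_eq_sum (X : Matrix (Fin n) (Fin n) ℝ) : X.trace = ∑ i, X i i := by
  simp [Matrix.trace, Matrix.diag]

/-- trace of the psd square root as the sum of square roots of eigenvalues -/
lemma trace_psdSqrt {M : Matrix (Fin n) (Fin n) ℝ} (h : M.PosSemidef) :
    (psdSqrt M).trace = ∑ i, Real.sqrt (h.1.eigenvalues i) := by
  rw [psdSqrt_eq h]
  unfold pSqrt
  rw [trace_mul_cycle]
  rw [show ((star h.1.eigenvectorUnitary : Matrix (Fin n) (Fin n) ℝ)) *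
      (h.1.eigenvectorUnitary.1) = 1 from Unitary.coe_star_mul_self _]
  rw [Matrix.one_mul, trace_diagonal]
  simp [RCLike.ofReal_real_eq_id]

/-- Matrix whose `i`-th column is `c i`. -/
def colMat (c : Fin n → Fin n → ℝ) : Matrix (Fin n) (Fin n) ℝ :=
  Matrix.of fun a i => c i a

lemma colMat_orth {c : Fin n → Fin n → ℝ}
    (h : ∀ i j, c i ⬝ᵥ c j = if i = j then 1 else 0) :
    (colMat c)ᴴ * (colMat c) = 1 := by
  ext i j
  simp only [mul_apply, conjTranspose_apply, star_trivial, colMat, Matrix.of_apply,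
    one_apply]
  exact h i j

lemma mulVec_self_dot (U : Matrix (Fin n) (Fin n) ℝ) (hU : Uᴴ * U = 1) (v : Fin n → ℝ) :
    (U *ᵥ v) ⬝ᵥ (U *ᵥ v) = v ⬝ᵥ v := by
  rw [mulVec_dot, mulVec_mulVec, hU, one_mulVec]

/-- L1': upper bound for trace against orthogonal matrices. -/
lemma trace_mul_le_aux (M U : Matrix (Fin n) (Fin n) ℝ) (hU : Uᴴ * U = 1) :
    (M * U).trace ≤ (psdSqrt (M * Mᴴ)).trace := by
  have hP : (M * Mᴴ).PosSemidef := posSemidef_self_mul_conjTranspose M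
  have hQ : (colMat (evB hP.1))ᴴ * (colMat (evB hP.1)) = 1 := colMat_orth (evB_dot hP.1)
  set Q : Matrix (Fin n) (Fin n) ℝ := colMat (evB hP.1) with hQdef
  have hQ' : Q * Qᴴ = 1 := mul_eq_one_comm.mp hQ
  have htr : (M * U).trace = (Qᴴ * (M * U) * Q).trace := by
    rw [trace_mul_cycle, ← Matrix.mul_assoc, hQ', Matrix.one_mul]
  rw [htr, trace_psdSqrt hP, trace_eq_sum]
  apply Finset.sum_le_sum
  intro i _
  rw [diag3 Q (M * U) Q]
  have hcol : (fun a => Q a i) = evB hP.1 i := rfl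
  rw [hcol]
  have h1 : (M * U) *ᵥ evB hP.1 i = M *ᵥ (U *ᵥ evB hP.1 i) := (mulVec_mulVec _ _ _).symm
  rw [h1, dot_mulVec M (evB hP.1 i) (U *ᵥ evB hP.1 i)]
  have hU1 : (U *ᵥ evB hP.1 i) ⬝ᵥ (U *ᵥ evB hP.1 i) = 1 := by
    rw [mulVec_self_dot U hU, evB_dot, if_pos rfl]
  have hM1 : (Mᴴ *ᵥ evB hP.1 i) ⬝ᵥ (Mᴴ *ᵥ evB hP.1 i) = hP.1.eigenvalues i := by
    rw [mulVec_dot Mᴴ, conjTranspose_conjTranspose, mulVec_mulVec, evB_mulVec hP.1 i,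
      dotProduct_smul, smul_eq_mul, evB_dot, if_pos rfl, mul_one]
  calc (Mᴴ *ᵥ evB hP.1 i) ⬝ᵥ (U *ᵥ evB hP.1 i)
      ≤ Real.sqrt ((Mᴴ *ᵥ evB hP.1 i) ⬝ᵥ (Mᴴ *ᵥ evB hP.1 i)) *
        Real.sqrt ((U *ᵥ evB hP.1 i) ⬝ᵥ (U *ᵥ evB hP.1 i)) := dot_le_sqrt _ _
    _ = Real.sqrt (hP.1.eigenvalues i) := by rw [hM1, hU1, Real.sqrt_one, mul_one]

/-- L1: `tr (N W) ≤ tr √(NᴴN)` for orthogonal `W`. -/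
lemma trace_mul_le (N W : Matrix (Fin n) (Fin n) ℝ) (hW : Wᴴ * W = 1) :
    (N * W).trace ≤ (psdSqrt (Nᴴ * N)).trace := by
  have h1 : (N * W).trace = (Nᴴ * Wᴴ).trace := by
    have h := trace_conjTranspose (N * W)
    rw [conjTranspose_mul, star_trivial] at h
    rw [← h, trace_mul_comm]
  rw [h1]
  have h2 := trace_mul_le_aux Nᴴ Wᴴ (by
    rw [conjTranspose_conjTranspose]
    exact mul_eq_one_comm.mp hW)
  rwa [conjTranspose_conjTranspose] at h2

/-- L2: the trace bound is attained (polar decomposition). -/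
lemma exists_orth_trace_eq (N : Matrix (Fin n) (Fin n) ℝ) :
    ∃ W : Matrix (Fin n) (Fin n) ℝ, Wᴴ * W = 1 ∧
      (N * W).trace = (psdSqrt (Nᴴ * N)).trace := by
  classical
  have hP : (Nᴴ * N).PosSemidef := posSemidef_conjTranspose_mul_self N
  have hP' : (N * Nᴴ).PosSemidef := posSemidef_self_mul_conjTranspose N
  -- cardinalities of zero eigenvalue sets agree
  have hrank : Fintype.card {i // hP.1.eigenvalues i ≠ 0} =
      Fintype.card {i // hP'.1.eigenvalues i ≠ 0} := by
    rw [← hP.1.rank_eq_card_non_zero_eigs, ← hP'.1.rank_eq_card_non_zero_eigs,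
      rank_conjTranspose_mul_self, rank_self_mul_conjTranspose]
  have hcard : Fintype.card {i // hP.1.eigenvalues i = 0} =
      Fintype.card {i // hP'.1.eigenvalues i = 0} := by
    have e1 : Fintype.card {i // hP.1.eigenvalues i = 0} =
        Fintype.card {i // ¬ hP.1.eigenvalues i ≠ 0} :=
      Fintype.card_congr (Equiv.subtypeEquivRight (fun x => by simp))
    have e2 : Fintype.card {i // hP'.1.eigenvalues i = 0} =
        Fintype.card {i // ¬ hP'.1.eigenvalues i ≠ 0} :=
      Fintype.card_congr (Equiv.subtypeEquivRight (fun x => by simp))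
    rw [e1, e2, Fintype.card_subtype_compl (fun i => hP.1.eigenvalues i ≠ 0),
      Fintype.card_subtype_compl (fun i => hP'.1.eigenvalues i ≠ 0), hrank]
  set e : {i // hP.1.eigenvalues i = 0} ≃ {i // hP'.1.eigenvalues i = 0} :=
    Fintype.equivOfCardEq hcard with hedef
  -- basic facts
  have hq0 : ∀ i, hP.1.eigenvalues i = 0 → N *ᵥ evB hP.1 i = 0 := by
    intro i hi
    rw [← dotProduct_self_eq_zero (v := N *ᵥ evB hP.1 i)]
    rw [mulVec_dot, mulVec_mulVec, evB_mulVec hP.1 i, hi, zero_smul, dotProduct_zero]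
  have hq'0 : ∀ j, hP'.1.eigenvalues j = 0 → Nᴴ *ᵥ evB hP'.1 j = 0 := by
    intro j hj
    rw [← dotProduct_self_eq_zero (v := Nᴴ *ᵥ evB hP'.1 j)]
    rw [mulVec_dot, conjTranspose_conjTranspose, mulVec_mulVec, evB_mulVec hP'.1 j, hj,
      zero_smul, dotProduct_zero]
  have hNq_dot : ∀ i j, (N *ᵥ evB hP.1 i) ⬝ᵥ (N *ᵥ evB hP.1 j) =
      hP.1.eigenvalues j * (evB hP.1 i ⬝ᵥ evB hP.1 j) := by
    intro i j
    rw [mulVec_dot N (evB hP.1 i) (N *ᵥ evB hP.1 j), mulVec_mulVec, evB_mulVec hP.1 j,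
      dotProduct_smul, smul_eq_mul]
  have hcross : ∀ i j, hP'.1.eigenvalues j = 0 →
      (N *ᵥ evB hP.1 i) ⬝ᵥ evB hP'.1 j = 0 := by
    intro i j hj
    rw [mulVec_dot, hq'0 j hj, dotProduct_zero]
  -- the columns
  set u : Fin n → Fin n → ℝ := fun i =>
    if h : hP.1.eigenvalues i = 0 then
      evB hP'.1 ((e ⟨i, h⟩ : {j // hP'.1.eigenvalues j = 0}) : Fin n)
    else (Real.sqrt (hP.1.eigenvalues i))⁻¹ • (N *ᵥ evB hP.1 i) with hudef
  have hu : ∀ i j, u i ⬝ᵥ u j = if i = j then 1 else 0 := by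
    intro i j
    by_cases hi : hP.1.eigenvalues i = 0 <;> by_cases hj : hP.1.eigenvalues j = 0
    · simp only [hudef]
      rw [dif_pos hi, dif_pos hj, evB_dot]
      have hiff : ((e ⟨i, hi⟩ : {j // hP'.1.eigenvalues j = 0}) : Fin n) =
          ((e ⟨j, hj⟩ : {j // hP'.1.eigenvalues j = 0}) : Fin n) ↔ i = j := by
        constructor
        · intro h
          have := e.injective (Subtype.ext h)
          exact congrArg Subtype.val this
        · intro h; subst h; rfl
      by_cases hij : i = j
      · rw [if_pos (hiff.mpr hij), if_pos hij]
      · rw [if_neg (fun h => hij (hiff.mp h)), if_neg hij]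
    · have hij : i ≠ j := fun h => hj (h ▸ hi)
      simp only [hudef]
      rw [dif_pos hi, dif_neg hj, if_neg hij]
      rw [dotProduct_smul, smul_eq_mul, dotProduct_comm,
        hcross j (((e ⟨i, hi⟩ : {j // hP'.1.eigenvalues j = 0}) : Fin n))
          (e ⟨i, hi⟩).2, mul_zero]
    · have hij : i ≠ j := fun h => hi (h ▸ hj)
      simp only [hudef]
      rw [dif_neg hi, dif_pos hj, if_neg hij]
      rw [smul_dotProduct, smul_eq_mul,
        hcross i (((e ⟨j, hj⟩ : {j // hP'.1.eigenvalues j = 0}) : Fin n))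
          (e ⟨j, hj⟩).2, mul_zero]
    · simp only [hudef]
      rw [dif_neg hi, dif_neg hj]
      rw [smul_dotProduct, dotProduct_smul, smul_eq_mul, smul_eq_mul, hNq_dot i j,
        evB_dot]
      have h2 : Real.sqrt (hP.1.eigenvalues i) * Real.sqrt (hP.1.eigenvalues i) =
          hP.1.eigenvalues i := Real.mul_self_sqrt (hP.eigenvalues_nonneg i)
      have hne : Real.sqrt (hP.1.eigenvalues i) ≠ 0 :=
        Real.sqrt_ne_zero'.mpr (lt_of_le_of_ne (hP.eigenvalues_nonneg i) (Ne.symm hi))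
      by_cases hij : i = j
      · subst hij
        rw [if_pos rfl, mul_one]
        field_simp
        exact (Real.sq_sqrt (hP.eigenvalues_nonneg i)).symm
      · rw [if_neg hij]
        ring
  -- assemble matrices
  have hQQ : (colMat (evB hP.1))ᴴ * (colMat (evB hP.1)) = 1 := colMat_orth (evB_dot hP.1)
  have hUU : (colMat u)ᴴ * (colMat u) = 1 := colMat_orth hu
  set Q : Matrix (Fin n) (Fin n) ℝ := colMat (evB hP.1) with hQdef
  set U : Matrix (Fin n) (Fin n) ℝ := colMat u with hUdef
  have hUU' : U * Uᴴ = 1 := mul_eq_one_comm.mp hUU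
  refine ⟨Q * Uᴴ, ?_, ?_⟩
  · rw [conjTranspose_mul, conjTranspose_conjTranspose, Matrix.mul_assoc,
      ← Matrix.mul_assoc Qᴴ Q Uᴴ, hQQ, Matrix.one_mul, hUU']
  · rw [trace_psdSqrt hP]
    rw [show N * (Q * Uᴴ) = N * Q * Uᴴ from (Matrix.mul_assoc _ _ _).symm,
      trace_mul_cycle, trace_eq_sum]
    apply Finset.sum_congr rfl
    intro i _
    rw [diag3 U N Q]
    have hcolU : (fun a => U a i) = u i := rfl
    have hcolQ : (fun a => Q a i) = evB hP.1 i := rfl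
    rw [hcolU, hcolQ]
    by_cases hi : hP.1.eigenvalues i = 0
    · rw [hq0 i hi, dotProduct_zero, hi, Real.sqrt_zero]
    · simp only [hudef]
      rw [dif_neg hi]
      rw [smul_dotProduct, smul_eq_mul, hNq_dot i i, evB_dot, if_pos rfl, mul_one]
      have h2 : Real.sqrt (hP.1.eigenvalues i) * Real.sqrt (hP.1.eigenvalues i) =
          hP.1.eigenvalues i := Real.mul_self_sqrt (hP.eigenvalues_nonneg i)
      have hne : Real.sqrt (hP.1.eigenvalues i) ≠ 0 :=
        Real.sqrt_ne_zero'.mpr (lt_of_le_of_ne (hP.eigenvalues_nonneg i) (Ne.symm hi))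
      field_simp
      exact (Real.sq_sqrt (hP.eigenvalues_nonneg i)).symm

/-- trace of `Xᴴ * Y` as a double sum -/
lemma trace_conj_mul (X Y : Matrix (Fin n) (Fin n) ℝ) :
    (Xᴴ * Y).trace = ∑ p : Fin n × Fin n, X p.1 p.2 * Y p.1 p.2 := by
  rw [trace_eq_sum, ← Finset.univ_product_univ, Finset.sum_product, Finset.sum_comm]
  apply Finset.sum_congr rfl
  intro j _
  rw [mul_apply]
  apply Finset.sum_congr rfl
  intro i _
  rw [conjTranspose_apply, star_trivial]

lemma trace_conj_self_nonneg (X : Matrix (Fin n) (Fin n) ℝ) :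
    0 ≤ (Xᴴ * X).trace := by
  rw [trace_conj_mul]
  apply Finset.sum_nonneg
  intro p _
  exact mul_self_nonneg _

/-- Cauchy–Schwarz for the Frobenius inner product. -/
lemma trace_conj_mul_le (X Y : Matrix (Fin n) (Fin n) ℝ) :
    (Xᴴ * Y).trace ≤ Real.sqrt ((Xᴴ * X).trace) * Real.sqrt ((Yᴴ * Y).trace) := by
  rw [trace_conj_mul, trace_conj_mul, trace_conj_mul]
  have h := Finset.sum_mul_sq_le_sq_mul_sq Finset.univ
    (fun p : Fin n × Fin n => X p.1 p.2) (fun p : Fin n × Fin n => Y p.1 p.2)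
  have hx : ∑ p : Fin n × Fin n, X p.1 p.2 * X p.1 p.2 =
      ∑ p : Fin n × Fin n, X p.1 p.2 ^ 2 := by
    apply Finset.sum_congr rfl; intro p _; rw [pow_two]
  have hy : ∑ p : Fin n × Fin n, Y p.1 p.2 * Y p.1 p.2 =
      ∑ p : Fin n × Fin n, Y p.1 p.2 ^ 2 := by
    apply Finset.sum_congr rfl; intro p _; rw [pow_two]
  calc (∑ p : Fin n × Fin n, X p.1 p.2 * Y p.1 p.2)
      ≤ |∑ p : Fin n × Fin n, X p.1 p.2 * Y p.1 p.2| := le_abs_self _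
    _ = Real.sqrt ((∑ p : Fin n × Fin n, X p.1 p.2 * Y p.1 p.2) ^ 2) :=
        (Real.sqrt_sq_eq_abs _).symm
    _ ≤ Real.sqrt ((∑ p : Fin n × Fin n, X p.1 p.2 ^ 2) *
        (∑ p : Fin n × Fin n, Y p.1 p.2 ^ 2)) := Real.sqrt_le_sqrt h
    _ = _ := by
        rw [Real.sqrt_mul (by positivity), hx, hy]

/-- the Frobenius distance -/
noncomputable def gdist (X Y : Matrix (Fin n) (Fin n) ℝ) : ℝ :=
  Real.sqrt (((X - Y)ᴴ * (X - Y)).trace)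

lemma trace_conj_expand (X Y : Matrix (Fin n) (Fin n) ℝ) :
    ((X - Y)ᴴ * (X - Y)).trace =
      (Xᴴ * X).trace + (Yᴴ * Y).trace - 2 * (Xᴴ * Y).trace := by
  have hsym : (Yᴴ * X).trace = (Xᴴ * Y).trace := by
    rw [trace_conj_mul, trace_conj_mul]
    apply Finset.sum_congr rfl; intro p _; ring
  rw [conjTranspose_sub, Matrix.sub_mul, Matrix.mul_sub, Matrix.mul_sub,
    Matrix.trace_sub, Matrix.trace_sub, Matrix.trace_sub, hsym]
  ring

lemma gdist_triangle (X Y Z : Matrix (Fin n) (Fin n) ℝ) :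
    gdist X Z ≤ gdist X Y + gdist Y Z := by
  have hab : X - Z = (X - Y) + (Y - Z) := by abel
  unfold gdist
  rw [hab]
  set a := X - Y
  set b := Y - Z
  have hexp : ((a + b)ᴴ * (a + b)).trace =
      (aᴴ * a).trace + (bᴴ * b).trace + 2 * (aᴴ * b).trace := by
    have hsym : (bᴴ * a).trace = (aᴴ * b).trace := by
      rw [trace_conj_mul, trace_conj_mul]
      apply Finset.sum_congr rfl; intro p _; ring
    rw [conjTranspose_add, Matrix.add_mul, Matrix.mul_add, Matrix.mul_add,
      Matrix.trace_add, Matrix.trace_add, Matrix.trace_add, hsym]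
    ring
  have hCS := trace_conj_mul_le a b
  have hbound : ((a + b)ᴴ * (a + b)).trace ≤
      (Real.sqrt ((aᴴ * a).trace) + Real.sqrt ((bᴴ * b).trace)) ^ 2 := by
    rw [hexp, add_sq]
    have h1 : Real.sqrt ((aᴴ * a).trace) ^ 2 = (aᴴ * a).trace :=
      Real.sq_sqrt (trace_conj_self_nonneg a)
    have h2 : Real.sqrt ((bᴴ * b).trace) ^ 2 = (bᴴ * b).trace :=
      Real.sq_sqrt (trace_conj_self_nonneg b)
    rw [h1, h2]
    nlinarith [hCS]
  calc Real.sqrt (((a + b)ᴴ * (a + b)).trace)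
      ≤ Real.sqrt ((Real.sqrt ((aᴴ * a).trace) + Real.sqrt ((bᴴ * b).trace)) ^ 2) :=
        Real.sqrt_le_sqrt hbound
    _ = _ := Real.sqrt_sq (by positivity)

end BuresAux

open BuresAux in
/-- **Triangle inequality for the Bures distance** on real symmetric positive semidefinite
matrices: `d_B(A, C) ≤ d_B(A, B) + d_B(B, C)`. -/
theorem buresDist_triangle
    (n : ℕ) (A B C : Matrix (Fin n) (Fin n) ℝ)
    (hA : A.PosSemidef) (hB : B.PosSemidef) (hC : C.PosSemidef) :
    buresDist A C ≤ buresDist A B + buresDist B C := by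
  classical
  simp only [buresDist]
  set sA := psdSqrt A with hsAdef
  set sB := psdSqrt B with hsBdef
  set sC := psdSqrt C with hsCdef
  have hsAH : sAᴴ = sA := by rw [hsAdef, psdSqrt_eq hA]; exact pSqrt_isHermitian hA
  have hsBH : sBᴴ = sB := by rw [hsBdef, psdSqrt_eq hB]; exact pSqrt_isHermitian hB
  have hsCH : sCᴴ = sC := by rw [hsCdef, psdSqrt_eq hC]; exact pSqrt_isHermitian hC
  have hsA2 : sA * sA = A := by rw [hsAdef, psdSqrt_eq hA]; exact pSqrt_mul_self hA
  have hsB2 : sB * sB = B := by rw [hsBdef, psdSqrt_eq hB]; exact pSqrt_mul_self hB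
  have hsC2 : sC * sC = C := by rw [hsCdef, psdSqrt_eq hC]; exact pSqrt_mul_self hC
  -- polar decompositions
  obtain ⟨W₁, hW₁, htr₁⟩ := exists_orth_trace_eq (sB * sA)
  obtain ⟨W₂, hW₂, htr₂⟩ := exists_orth_trace_eq (sC * sB)
  have hW₁₂ : (W₁ * W₂)ᴴ * (W₁ * W₂) = 1 := by
    rw [conjTranspose_mul, Matrix.mul_assoc, ← Matrix.mul_assoc W₁ᴴ W₁ W₂, hW₁,
      Matrix.one_mul, hW₂]
  have hN₁ : (sB * sA)ᴴ * (sB * sA) = sA * B * sA := by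
    rw [conjTranspose_mul, hsAH, hsBH, Matrix.mul_assoc, ← Matrix.mul_assoc sB sB sA,
      hsB2, ← Matrix.mul_assoc]
  have hN₂ : (sC * sB)ᴴ * (sC * sB) = sB * C * sB := by
    rw [conjTranspose_mul, hsBH, hsCH, Matrix.mul_assoc, ← Matrix.mul_assoc sC sC sB,
      hsC2, ← Matrix.mul_assoc]
  have hN₃ : (sC * sA)ᴴ * (sC * sA) = sA * C * sA := by
    rw [conjTranspose_mul, hsAH, hsCH, Matrix.mul_assoc, ← Matrix.mul_assoc sC sC sA,
      hsC2, ← Matrix.mul_assoc]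
  rw [hN₁] at htr₁
  rw [hN₂] at htr₂
  -- identify the Bures expressions with Frobenius distances
  have hgAB : Real.sqrt (A.trace + B.trace - 2 * (psdSqrt (sA * B * sA)).trace) =
      gdist sA (W₁ * sB) := by
    unfold gdist
    congr 1
    rw [trace_conj_expand]
    have h1 : sAᴴ * sA = A := by rw [hsAH, hsA2]
    have h2 : (W₁ * sB)ᴴ * (W₁ * sB) = B := by
      rw [conjTranspose_mul, hsBH, Matrix.mul_assoc, ← Matrix.mul_assoc W₁ᴴ W₁ sB, hW₁,
        Matrix.one_mul, hsB2]
    have h3 : (sAᴴ * (W₁ * sB)).trace = (sB * sA * W₁).trace := by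
      rw [hsAH, show sB * sA * W₁ = sB * (sA * W₁) from Matrix.mul_assoc _ _ _,
        trace_mul_comm sB (sA * W₁), Matrix.mul_assoc]
    rw [h1, h2, h3, htr₁]
  have hgBC : Real.sqrt (B.trace + C.trace - 2 * (psdSqrt (sB * C * sB)).trace) =
      gdist (W₁ * sB) (W₁ * (W₂ * sC)) := by
    unfold gdist
    congr 1
    have hfactor : W₁ * sB - W₁ * (W₂ * sC) = W₁ * (sB - W₂ * sC) := by
      rw [Matrix.mul_sub]
    rw [hfactor]
    have hred : ((W₁ * (sB - W₂ * sC))ᴴ * (W₁ * (sB - W₂ * sC))).trace =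
        ((sB - W₂ * sC)ᴴ * (sB - W₂ * sC)).trace := by
      rw [conjTranspose_mul, Matrix.mul_assoc, ← Matrix.mul_assoc W₁ᴴ W₁ _, hW₁,
        Matrix.one_mul]
    rw [hred, trace_conj_expand]
    have h1 : sBᴴ * sB = B := by rw [hsBH, hsB2]
    have h2 : (W₂ * sC)ᴴ * (W₂ * sC) = C := by
      rw [conjTranspose_mul, hsCH, Matrix.mul_assoc, ← Matrix.mul_assoc W₂ᴴ W₂ sC, hW₂,
        Matrix.one_mul, hsC2]
    have h3 : (sBᴴ * (W₂ * sC)).trace = (sC * sB * W₂).trace := by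
      rw [hsBH, show sC * sB * W₂ = sC * (sB * W₂) from Matrix.mul_assoc _ _ _,
        trace_mul_comm sC (sB * W₂), Matrix.mul_assoc]
    rw [h1, h2, h3, htr₂]
  -- bound the A–C term
  have hgAC : Real.sqrt (A.trace + C.trace - 2 * (psdSqrt (sA * C * sA)).trace) ≤
      gdist sA (W₁ * (W₂ * sC)) := by
    unfold gdist
    apply Real.sqrt_le_sqrt
    rw [trace_conj_expand]
    have h1 : sAᴴ * sA = A := by rw [hsAH, hsA2]
    have h2 : (W₁ * (W₂ * sC))ᴴ * (W₁ * (W₂ * sC)) = C := by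
      rw [← Matrix.mul_assoc W₁ W₂ sC, conjTranspose_mul, hsCH, Matrix.mul_assoc,
        ← Matrix.mul_assoc (W₁ * W₂)ᴴ (W₁ * W₂) sC, hW₁₂, Matrix.one_mul, hsC2]
    have h3 : (sAᴴ * (W₁ * (W₂ * sC))).trace = (sC * sA * (W₁ * W₂)).trace := by
      rw [hsAH, show sC * sA * (W₁ * W₂) = sC * (sA * (W₁ * W₂)) from
        Matrix.mul_assoc _ _ _, trace_mul_comm sC (sA * (W₁ * W₂)), Matrix.mul_assoc,
        Matrix.mul_assoc]
    have hle := trace_mul_le (sC * sA) (W₁ * W₂) hW₁₂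
    rw [hN₃] at hle
    rw [h1, h2, h3]
    linarith
  calc Real.sqrt (A.trace + C.trace - 2 * (psdSqrt (sA * C * sA)).trace)
      ≤ gdist sA (W₁ * (W₂ * sC)) := hgAC
    _ ≤ gdist sA (W₁ * sB) + gdist (W₁ * sB) (W₁ * (W₂ * sC)) := gdist_triangle _ _ _
    _ = Real.sqrt (A.trace + B.trace - 2 * (psdSqrt (sA * B * sA)).trace) +
        Real.sqrt (B.trace + C.trace - 2 * (psdSqrt (sB * C * sB)).trace) := by
        rw [hgAB, hgBC]
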